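/- Let n, n_c ≥ 1 be integers. Let S, E ∈ ℝ^{n×n} with S skew-symmetric (S^T = −S), E symmetric, and S·1 = −½·E·1. Let f* : ℝ^{n_c} × ℝ^{n_c} → ℝ^{n_c} be a symmetric two-point flux satisfying the Tadmor condition with respect to W̃ : ℝ^{n_c} → ℝ^{n_c} and ψ̃ : ℝ^{n_c} → ℝ. Let u be a node-state array of n nodes in ℝ^{n_c}, w ∈ ℝ^{n·n_c} the concatenation of W̃(u_j), and ψ ∈ ℝ^n the vector with entries ψ̃(u_j). Then: w^T·(S̄ ∘ F(u, u))·1 = −1^T·E·ψ. -/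
import Mathlib


open Matrix

/-- `M̄ = M ⊗ I_{n_c}`: the Kronecker product of a matrix with the `nc × nc`
identity, indexed by pairs (node, component). -/
def blockMat {n m : ℕ} (nc : ℕ) (M : Matrix (Fin n) (Fin m) ℝ) :
    Matrix (Fin n × Fin nc) (Fin m × Fin nc) ℝ :=
  Matrix.of fun jp lq => M jp.1 lq.1 * (if jp.2 = lq.2 then 1 else 0)

/-- Concatenation of a node-state array into a vector of `ℝ^{n·n_c}`. -/
def concatVec {n nc : ℕ} (u : Fin n → Fin nc → ℝ) : Fin n × Fin nc → ℝ :=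
  fun jp => u jp.1 jp.2

/-- The block matrix `F(u, v)` whose `(j, l)` block of size `nc × nc` is
`2·diag(f*(u_j, v_l))`. -/
def fluxMat {n m nc : ℕ} (fstar : (Fin nc → ℝ) → (Fin nc → ℝ) → Fin nc → ℝ)
    (u : Fin n → Fin nc → ℝ) (v : Fin m → Fin nc → ℝ) :
    Matrix (Fin n × Fin nc) (Fin m × Fin nc) ℝ :=
  Matrix.of fun jp lq => if jp.2 = lq.2 then 2 * fstar (u jp.1) (v lq.1) jp.2 else 0

/-- **Hadamard-form volume-term identity.** For `S` skew-symmetric, `E` symmetric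
with `S·1 = −½·E·1`, and a symmetric two-point flux satisfying the Tadmor
condition: `wᵀ·(S̄ ∘ F(u, u))·1 = −1ᵀ·E·ψ`. -/
theorem hadamard_volume_term_eq_potential
    (n nc : ℕ) (hn : 1 ≤ n) (hnc : 1 ≤ nc)
    (S E : Matrix (Fin n) (Fin n) ℝ)
    (hS : Sᵀ = -S) (hE : E.IsSymm)
    (hSone : S *ᵥ 1 = -((1 / 2 : ℝ) • (E *ᵥ 1)))
    (fstar : (Fin nc → ℝ) → (Fin nc → ℝ) → Fin nc → ℝ)
    (hsym : ∀ a b, fstar a b = fstar b a)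
    (Wt : (Fin nc → ℝ) → Fin nc → ℝ) (ψt : (Fin nc → ℝ) → ℝ)
    (hTadmor : ∀ a b, (∑ c, (Wt b c - Wt a c) * fstar a b c) = ψt b - ψt a)
    (u : Fin n → Fin nc → ℝ) :
    concatVec (fun j => Wt (u j)) ⬝ᵥ
        ((blockMat nc S).hadamard (fluxMat fstar u u) *ᵥ 1)
      = -((1 : Fin n → ℝ) ⬝ᵥ (E *ᵥ (fun j => ψt (u j)))) := by
  classical
  set W : Fin n → Fin nc → ℝ := fun j => Wt (u j) with hW
  set ψ : Fin n → ℝ := fun j => ψt (u j) with hψ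
  set T : Fin n → Fin n → ℝ := fun j l => 2 * ∑ c, W j c * fstar (u j) (u l) c with hT
  have hSap : ∀ j l, S l j = - S j l := by
    intro j l
    have := congrFun (congrFun hS j) l
    simpa [Matrix.transpose_apply] using this
  have hEap : ∀ j l, E l j = E j l := by
    intro j l
    have := congrFun (congrFun hE j) l
    simpa [Matrix.transpose_apply] using this
  -- Step 1: LHS as a double sum
  have h1 : concatVec (fun j => Wt (u j)) ⬝ᵥ
        ((blockMat nc S).hadamard (fluxMat fstar u u) *ᵥ 1)
      = ∑ j, ∑ l, S j l * T j l := by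
    simp only [dotProduct, mulVec, Pi.one_apply, mul_one, hadamard_apply,
      blockMat, fluxMat, concatVec, Matrix.of_apply]
    rw [Fintype.sum_prod_type]
    refine Finset.sum_congr rfl fun j _ => ?_
    have hinner : ∀ c : Fin nc,
        (∑ lq : Fin n × Fin nc, S j lq.1 * (if c = lq.2 then 1 else 0) *
            (if c = lq.2 then 2 * fstar (u j) (u lq.1) c else 0))
        = ∑ l, S j l * (2 * fstar (u j) (u l) c) := by
      intro c
      rw [Fintype.sum_prod_type, Finset.sum_comm]
      rw [Finset.sum_eq_single c]
      · simp
      · intro d _ hd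
        apply Finset.sum_eq_zero
        intro l _
        simp [Ne.symm hd]
      · simp
    calc (∑ c, W j c * ∑ lq : Fin n × Fin nc, S j lq.1 * (if c = lq.2 then 1 else 0) *
            (if c = lq.2 then 2 * fstar (u j) (u lq.1) c else 0))
        = ∑ c, W j c * ∑ l, S j l * (2 * fstar (u j) (u l) c) := by
          refine Finset.sum_congr rfl fun c _ => ?_
          rw [hinner c]
      _ = ∑ c, ∑ l, W j c * (S j l * (2 * fstar (u j) (u l) c)) := by
          refine Finset.sum_congr rfl fun c _ => by rw [Finset.mul_sum]
      _ = ∑ l, S j l * T j l := by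
          rw [Finset.sum_comm]
          refine Finset.sum_congr rfl fun l _ => ?_
          simp only [hT, Finset.mul_sum]
          refine Finset.sum_congr rfl fun c _ => ?_
          ring
  -- Step 2: symmetrization
  have hflip : (∑ j, ∑ l, S j l * T l j) = -∑ j, ∑ l, S j l * T j l := by
    rw [Finset.sum_comm, ← Finset.sum_neg_distrib]
    refine Finset.sum_congr rfl fun j _ => ?_
    rw [← Finset.sum_neg_distrib]
    refine Finset.sum_congr rfl fun l _ => ?_
    rw [hSap j l]; ring
  have hTdiff : ∀ j l, T j l - T l j = 2 * (ψ j - ψ l) := by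
    intro j l
    have ht := hTadmor (u l) (u j)
    have hs : fstar (u l) (u j) = fstar (u j) (u l) := hsym _ _
    rw [hs] at ht
    have : T j l - T l j = 2 * ∑ c, (Wt (u j) c - Wt (u l) c) * fstar (u j) (u l) c := by
      rw [hT]
      simp only [hW]
      rw [← mul_sub]
      congr 1
      rw [← Finset.sum_sub_distrib]
      refine Finset.sum_congr rfl fun c _ => by rw [hs]; ring
    rw [this, ht, hψ]
  have h2 : (∑ j, ∑ l, S j l * T j l) = ∑ j, ∑ l, S j l * (ψ j - ψ l) := by
    have hdouble : (2 : ℝ) * ∑ j, ∑ l, S j l * T j l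
        = ∑ j, ∑ l, S j l * (T j l - T l j) := by
      have : (∑ j, ∑ l, S j l * (T j l - T l j))
          = (∑ j, ∑ l, S j l * T j l) - (∑ j, ∑ l, S j l * T l j) := by
        rw [← Finset.sum_sub_distrib]
        refine Finset.sum_congr rfl fun j _ => ?_
        rw [← Finset.sum_sub_distrib]
        refine Finset.sum_congr rfl fun l _ => by ring
      rw [this, hflip]; ring
    have h3 : (∑ j, ∑ l, S j l * (T j l - T l j))
        = 2 * ∑ j, ∑ l, S j l * (ψ j - ψ l) := by
      rw [Finset.mul_sum]
      refine Finset.sum_congr rfl fun j _ => ?_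
      rw [Finset.mul_sum]
      refine Finset.sum_congr rfl fun l _ => ?_
      rw [hTdiff j l]; ring
    have := hdouble.trans h3
    linarith
  -- Step 3: boundary term
  have hS1 : ∀ j, (∑ l, S j l) = -(1/2) * ∑ l, E j l := by
    intro j
    have := congrFun hSone j
    simpa [mulVec, dotProduct, Pi.one_apply, mul_one, neg_mul, Finset.mul_sum] using this
  have h4 : (∑ j, ∑ l, S j l * (ψ j - ψ l)) = -∑ j, ∑ l, E j l * ψ l := by
    have ha : (∑ j, ∑ l, S j l * ψ j) = ∑ j, (∑ l, S j l) * ψ j := by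
      refine Finset.sum_congr rfl fun j _ => by rw [Finset.sum_mul]
    have hb : (∑ j, ∑ l, S j l * ψ l) = -∑ j, (∑ l, S j l) * ψ j := by
      rw [Finset.sum_comm, ← Finset.sum_neg_distrib]
      refine Finset.sum_congr rfl fun j _ => ?_
      rw [Finset.sum_mul, ← Finset.sum_neg_distrib]
      refine Finset.sum_congr rfl fun l _ => by rw [hSap l j]; ring
    have hsplit : (∑ j, ∑ l, S j l * (ψ j - ψ l))
        = (∑ j, ∑ l, S j l * ψ j) - (∑ j, ∑ l, S j l * ψ l) := by
      rw [← Finset.sum_sub_distrib]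
      refine Finset.sum_congr rfl fun j _ => ?_
      rw [← Finset.sum_sub_distrib]
      refine Finset.sum_congr rfl fun l _ => by ring
    rw [hsplit, ha, hb, sub_neg_eq_add]
    have : (∑ j, (∑ l, S j l) * ψ j) = -(1/2) * ∑ j, (∑ l, E j l) * ψ j := by
      rw [Finset.mul_sum]
      refine Finset.sum_congr rfl fun j _ => by rw [hS1 j]; ring
    rw [this]
    have hEswap : (∑ j, ∑ l, E j l * ψ l) = ∑ j, (∑ l, E j l) * ψ j := by
      rw [Finset.sum_comm]
      refine Finset.sum_congr rfl fun j _ => ?_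
      rw [Finset.sum_mul]
      refine Finset.sum_congr rfl fun l _ => by rw [hEap l j]
    rw [hEswap]; ring
  rw [h1, h2, h4]
  simp [dotProduct, mulVec, hψ, Finset.mul_sum]
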